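/- arXiv:1310.5715 — 5 statements merged into one kernel-verified Lean document; each statement's English description precedes it below -/
import Mathlib

section
/- For a single SGD step x' = x - γ∇f_i(x) with i drawn from distribution D, if each f_i is convex with L_i-Lipschitz gradient, L_i ≤ supL almost surely, F(x) = E_i[f_i(x)] is μ-strongly convex with minimizer x⋆, σ² = E_i‖∇f_i(x⋆)‖², and 0 < γ ≤ 1/supL, then E_i‖x' - x⋆‖² ≤ (1 - 2γμ(1 - γ·supL))‖x - x⋆‖² + 2γ²σ². -/
/-!
Expanding the square, `‖x - γ ∇fᵢ(x) - x⋆‖² = ‖x - x⋆‖² - 2γ ⟪x - x⋆, ∇fᵢ(x)⟫ + γ² ‖∇fᵢ(x)‖²`.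
Co-coercivity of the gradient of a convex `L`-smooth function,
`‖∇f x - ∇f y‖² ≤ L ⟪x - y, ∇f x - ∇f y⟫`, and `‖u + v‖² ≤ 2‖u‖² + 2‖v‖²` bound the last term by
`2γ² L ⟪x - x⋆, ∇fᵢ(x) - ∇fᵢ(x⋆)⟫ + 2γ² ‖∇fᵢ(x⋆)‖²`. Averaging over `i` and using `∇F(x⋆) = 0`
turns both inner products into `⟪x - x⋆, ∇F(x) - ∇F(x⋆)⟫ ≥ μ ‖x - x⋆‖²`, which enters with the
coefficient `-2γ(1 - γL) ≤ 0`.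
-/

open scoped RealInnerProductSpace

section Smooth

variable {E : Type*} [NormedAddCommGroup E] [InnerProductSpace ℝ E] [CompleteSpace E]
  {f : E → ℝ}

theorem HasGradientAt.hasDerivAt_comp_add_smul {g x v : E} {t : ℝ}
    (hf : HasGradientAt f g (x + t • v)) :
    HasDerivAt (fun s : ℝ => f (x + s • v)) ⟪g, v⟫ t := by
  have hline : HasDerivAt (fun s : ℝ => x + s • v) v t := by
    simpa using ((hasDerivAt_id t).smul_const v).const_add x
  rw [hasGradientAt_iff_hasFDerivAt] at hf
  simpa [Function.comp_def] using hf.comp_hasDerivAt t hline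

theorem ConvexOn.add_inner_gradient_le (hc : ConvexOn ℝ Set.univ f) {x : E}
    (hf : DifferentiableAt ℝ f x) (y : E) : f x + ⟪gradient f x, y - x⟫ ≤ f y := by
  have hline : ConvexOn ℝ Set.univ (fun t : ℝ => f (x + t • (y - x))) := by
    simpa [Function.comp_def, AffineMap.lineMap_apply, add_comm] using
      hc.comp_affineMap (AffineMap.lineMap x y)
  have hd : HasDerivAt (fun t : ℝ => f (x + t • (y - x))) ⟪gradient f x, y - x⟫ 0 :=
    HasGradientAt.hasDerivAt_comp_add_smul (by simpa using hf.hasGradientAt)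
  have hslope := hline.le_slope_of_hasDerivAt (Set.mem_univ 0) (Set.mem_univ 1) one_pos hd
  simp only [slope_def_field, sub_zero, div_one, zero_smul, one_smul, add_zero,
    add_sub_cancel] at hslope
  linarith

theorem le_add_inner_gradient_add_mul_sq_of_lipschitz (hf : Differentiable ℝ f) {K : ℝ}
    (hlip : ∀ a b, ‖gradient f a - gradient f b‖ ≤ K * ‖a - b‖) (x y : E) :
    f y ≤ f x + ⟪gradient f x, y - x⟫ + K / 2 * ‖y - x‖ ^ 2 := by
  set v := y - x
  have hφ : ∀ t : ℝ, HasDerivAt (fun s : ℝ => f (x + s • v) - s * ⟪gradient f x, v⟫)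
      (⟪gradient f (x + t • v) - gradient f x, v⟫) t := fun t => by
    rw [inner_sub_left]
    exact (hf _).hasGradientAt.hasDerivAt_comp_add_smul.sub (hasDerivAt_mul_const _)
  have hB : ∀ t : ℝ, HasDerivAt (fun s : ℝ => f x + K / 2 * ‖v‖ ^ 2 * s ^ 2)
      (K * ‖v‖ ^ 2 * t) t := fun t => by
    refine (((hasDerivAt_pow 2 t).const_mul (K / 2 * ‖v‖ ^ 2)).const_add (f x)).congr_deriv ?_
    norm_num
    ring
  have hbound : ∀ t ∈ Set.Ico (0 : ℝ) 1,
      ⟪gradient f (x + t • v) - gradient f x, v⟫ ≤ K * ‖v‖ ^ 2 * t := fun t ht => calc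
    _ ≤ ‖gradient f (x + t • v) - gradient f x‖ * ‖v‖ := real_inner_le_norm _ _
    _ ≤ K * ‖t • v‖ * ‖v‖ := by
      gcongr; simpa using hlip (x + t • v) x
    _ = K * ‖v‖ ^ 2 * t := by rw [norm_smul, Real.norm_of_nonneg ht.1]; ring
  have hend := image_le_of_deriv_right_le_deriv_boundary
    (fun t _ => (hφ t).continuousAt.continuousWithinAt) (fun t _ => (hφ t).hasDerivWithinAt)
    (by simp) (fun t _ => (hB t).continuousAt.continuousWithinAt)
    (fun t _ => (hB t).hasDerivWithinAt) hbound (Set.right_mem_Icc.2 zero_le_one)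
  simp only [one_smul, one_mul, one_pow, v, add_sub_cancel] at hend
  linarith

theorem ConvexOn.add_inner_gradient_add_sq_div_le (hc : ConvexOn ℝ Set.univ f)
    (hf : Differentiable ℝ f) {K : ℝ} (hK : 0 < K)
    (hlip : ∀ a b, ‖gradient f a - gradient f b‖ ≤ K * ‖a - b‖) (x y : E) :
    f x + ⟪gradient f x, y - x⟫ + ‖gradient f y - gradient f x‖ ^ 2 / (2 * K) ≤ f y := by
  set Δ := gradient f y - gradient f x
  -- compare `f` at `y - K⁻¹ • Δ`, the minimiser of the quadratic upper bound at `y`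
  have hlow := hc.add_inner_gradient_le (hf x) (y - K⁻¹ • Δ)
  have hup := le_add_inner_gradient_add_mul_sq_of_lipschitz hf hlip y (y - K⁻¹ • Δ)
  rw [show y - K⁻¹ • Δ - x = (y - x) - K⁻¹ • Δ by abel, inner_sub_right,
    real_inner_smul_right] at hlow
  rw [sub_sub_cancel_left, inner_neg_right, real_inner_smul_right, norm_neg, norm_smul,
    Real.norm_of_nonneg (inv_nonneg.2 hK.le)] at hup
  have hΔ : ⟪gradient f y, Δ⟫ - ⟪gradient f x, Δ⟫ = ‖Δ‖ ^ 2 := by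
    rw [← inner_sub_left, real_inner_self_eq_norm_sq]
  have hK' : K / 2 * (K⁻¹ * ‖Δ‖) ^ 2 = K⁻¹ * ‖Δ‖ ^ 2 - ‖Δ‖ ^ 2 / (2 * K) := by
    field_simp
    ring
  linear_combination hlow + hup - K⁻¹ * hΔ + hK'

theorem ConvexOn.sq_norm_gradient_sub_le (hc : ConvexOn ℝ Set.univ f)
    (hf : Differentiable ℝ f) {K : ℝ} (hK : 0 < K)
    (hlip : ∀ a b, ‖gradient f a - gradient f b‖ ≤ K * ‖a - b‖) (x y : E) :
    ‖gradient f x - gradient f y‖ ^ 2 ≤ K * ⟪x - y, gradient f x - gradient f y⟫ := by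
  have hxy := hc.add_inner_gradient_add_sq_div_le hf hK hlip x y
  have hyx := hc.add_inner_gradient_add_sq_div_le hf hK hlip y x
  rw [norm_sub_rev] at hxy
  have hinner : ⟪gradient f x, y - x⟫ + ⟪gradient f y, x - y⟫ =
      -⟪x - y, gradient f x - gradient f y⟫ := by
    simp only [inner_sub_left, inner_sub_right, real_inner_comm x, real_inner_comm y]
    ring
  have hdiv : ‖gradient f x - gradient f y‖ ^ 2 / K ≤ ⟪x - y, gradient f x - gradient f y⟫ := by
    have h2 : ‖gradient f x - gradient f y‖ ^ 2 / K =
        2 * (‖gradient f x - gradient f y‖ ^ 2 / (2 * K)) := by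
      field_simp
    linarith
  rwa [div_le_iff₀' hK] at hdiv

theorem hasGradientAt_sum_mul {ι : Type*} [Fintype ι] (p : ι → ℝ) {f : ι → E → ℝ} {x : E}
    (hf : ∀ i, DifferentiableAt ℝ (f i) x) :
    HasGradientAt (fun z => ∑ i, p i * f i z) (∑ i, p i • gradient (f i) x) x := by
  rw [hasGradientAt_iff_hasFDerivAt, map_sum]
  simp only [map_smul]
  exact HasFDerivAt.fun_sum fun i _ =>
    (hasGradientAt_iff_hasFDerivAt.1 (hf i).hasGradientAt).const_mul (p i)

theorem IsLocalMin.hasGradientAt_eq_zero {g x : E} (h : IsLocalMin f x)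
    (hf : HasGradientAt f g x) : g = 0 := by
  rw [hasGradientAt_iff_hasFDerivAt] at hf
  simpa using h.hasFDerivAt_eq_zero hf

end Smooth

section Step

variable {E : Type*} [NormedAddCommGroup E] [InnerProductSpace ℝ E]

theorem norm_sub_smul_sq_le_of_cocoercive {a g g' : E} {γ K : ℝ}
    (hcoco : ‖g - g'‖ ^ 2 ≤ K * ⟪a, g - g'⟫) :
    ‖a - γ • g‖ ^ 2 ≤
      ‖a‖ ^ 2 - 2 * γ * ⟪a, g⟫ + 2 * γ ^ 2 * K * ⟪a, g - g'⟫ + 2 * γ ^ 2 * ‖g'‖ ^ 2 := by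
  have hg : ‖g‖ ^ 2 ≤ 2 * ‖g - g'‖ ^ 2 + 2 * ‖g'‖ ^ 2 := calc
    ‖g‖ ^ 2 ≤ (‖g - g'‖ + ‖g'‖) ^ 2 := by
      gcongr; simpa using norm_add_le (g - g') g'
    _ ≤ 2 * ‖g - g'‖ ^ 2 + 2 * ‖g'‖ ^ 2 := by linarith [add_sq_le (a := ‖g - g'‖) (b := ‖g'‖)]
  rw [norm_sub_sq_real, real_inner_smul_right, norm_smul, mul_pow, Real.norm_eq_abs, sq_abs]
  nlinarith [sq_nonneg γ]

theorem sum_mul_norm_sub_smul_sq_le {ι : Type*} [Fintype ι] {p : ι → ℝ} {g g' : ι → E}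
    {a : E} {γ K μ : ℝ} (hp : ∀ i, 0 ≤ p i) (hps : ∑ i, p i = 1)
    (hcoco : ∀ i, ‖g i - g' i‖ ^ 2 ≤ K * ⟪a, g i - g' i⟫) (hopt : ∑ i, p i • g' i = 0)
    (hmono : μ * ‖a‖ ^ 2 ≤ ⟪a, ∑ i, p i • g i⟫) (hγ : 0 ≤ γ) (hγK : γ * K ≤ 1) :
    ∑ i, p i * ‖a - γ • g i‖ ^ 2 ≤
      (1 - 2 * γ * μ * (1 - γ * K)) * ‖a‖ ^ 2 + 2 * γ ^ 2 * ∑ i, p i * ‖g' i‖ ^ 2 := by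
  set S := ⟪a, ∑ i, p i • g i⟫
  have hS : ∑ i, p i * ⟪a, g i⟫ = S := by
    simp only [S, inner_sum, real_inner_smul_right]
  have hS' : ∑ i, p i * ⟪a, g i - g' i⟫ = S := by
    simp only [inner_sub_right, mul_sub, Finset.sum_sub_distrib, hS]
    simp only [← real_inner_smul_right, ← inner_sum, hopt, inner_zero_right, sub_zero]
  calc ∑ i, p i * ‖a - γ • g i‖ ^ 2
      ≤ ∑ i, p i * (‖a‖ ^ 2 - 2 * γ * ⟪a, g i⟫ + 2 * γ ^ 2 * K * ⟪a, g i - g' i⟫ +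
          2 * γ ^ 2 * ‖g' i‖ ^ 2) :=
        Finset.sum_le_sum fun i _ =>
          mul_le_mul_of_nonneg_left (norm_sub_smul_sq_le_of_cocoercive (hcoco i)) (hp i)
    _ = ‖a‖ ^ 2 - 2 * γ * (1 - γ * K) * S + 2 * γ ^ 2 * ∑ i, p i * ‖g' i‖ ^ 2 := by
        have hterm : ∀ i, p i * (‖a‖ ^ 2 - 2 * γ * ⟪a, g i⟫ + 2 * γ ^ 2 * K * ⟪a, g i - g' i⟫ +
            2 * γ ^ 2 * ‖g' i‖ ^ 2) = p i * ‖a‖ ^ 2 - 2 * γ * (p i * ⟪a, g i⟫) +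
            2 * γ ^ 2 * K * (p i * ⟪a, g i - g' i⟫) + 2 * γ ^ 2 * (p i * ‖g' i‖ ^ 2) :=
          fun i => by ring
        simp only [hterm, Finset.sum_add_distrib, Finset.sum_sub_distrib, ← Finset.mul_sum,
          ← Finset.sum_mul, hps, hS, hS']
        ring
    _ ≤ _ := by nlinarith [mul_nonneg hγ (sub_nonneg.2 hγK)]

end Step

theorem stmt2_general {d n : ℕ}
    (f : Fin n → EuclideanSpace ℝ (Fin d) → ℝ)
    (L : Fin n → ℝ) (supL μ γ : ℝ)
    (p : Fin n → ℝ) (hp : ∀ i, 0 ≤ p i) (hps : ∑ i, p i = 1)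
    (hconv : ∀ i, ConvexOn ℝ Set.univ (f i))
    (hdiff : ∀ i, Differentiable ℝ (f i))
    (hlip : ∀ i x y, ‖gradient (f i) x - gradient (f i) y‖ ≤ L i * ‖x - y‖)
    (hLsup : ∀ i, L i ≤ supL) (hsupL : 0 < supL)
    (F : EuclideanSpace ℝ (Fin d) → ℝ) (hF : F = fun x => ∑ i, p i * f i x)
    (hsc : ∀ x y, μ * ‖x - y‖ ^ 2 ≤ ⟪x - y, gradient F x - gradient F y⟫)
    (xstar : EuclideanSpace ℝ (Fin d)) (hmin : ∀ x, F xstar ≤ F x)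
    (σ2 : ℝ) (hσ2 : σ2 = ∑ i, p i * ‖gradient (f i) xstar‖ ^ 2)
    (hγ0 : 0 < γ) (hγ : γ ≤ 1 / supL)
    (x : EuclideanSpace ℝ (Fin d)) :
    ∑ i, p i * ‖(x - γ • gradient (f i) x) - xstar‖ ^ 2 ≤
      (1 - 2 * γ * μ * (1 - γ * supL)) * ‖x - xstar‖ ^ 2 + 2 * γ ^ 2 * σ2 := by
  have hgradF : ∀ y, HasGradientAt F (∑ i, p i • gradient (f i) y) y := fun y =>
    hF ▸ hasGradientAt_sum_mul p fun i => hdiff i y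
  have hopt : ∑ i, p i • gradient (f i) xstar = 0 :=
    IsLocalMin.hasGradientAt_eq_zero (Filter.Eventually.of_forall hmin) (hgradF xstar)
  have hmono : μ * ‖x - xstar‖ ^ 2 ≤ ⟪x - xstar, ∑ i, p i • gradient (f i) x⟫ := by
    simpa only [(hgradF _).gradient, hopt, sub_zero] using hsc x xstar
  have hcoco : ∀ i, ‖gradient (f i) x - gradient (f i) xstar‖ ^ 2 ≤
      supL * ⟪x - xstar, gradient (f i) x - gradient (f i) xstar⟫ := fun i =>
    (hconv i).sq_norm_gradient_sub_le (hdiff i) hsupL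
      (fun a b => (hlip i a b).trans (by gcongr; exact hLsup i)) x xstar
  simp only [sub_right_comm x _ xstar]
  rw [hσ2]
  exact sum_mul_norm_sub_smul_sq_le hp hps hcoco hopt hmono hγ0.le
    ((le_div_iff₀ hsupL).1 hγ)

/-- One-step SGD contraction bound (Theorem 2.1, single step). -/
theorem stmt2 {d n : ℕ} (hn : 0 < n)
    (f : Fin n → EuclideanSpace ℝ (Fin d) → ℝ)
    (L : Fin n → ℝ) (supL μ γ : ℝ)
    (p : Fin n → ℝ) (hp : ∀ i, 0 ≤ p i) (hps : ∑ i, p i = 1)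
    (hconv : ∀ i, ConvexOn ℝ Set.univ (f i))
    (hdiff : ∀ i, Differentiable ℝ (f i))
    (hlip : ∀ i x y, ‖gradient (f i) x - gradient (f i) y‖ ≤ L i * ‖x - y‖)
    (hLsup : ∀ i, L i ≤ supL) (hsupL : 0 < supL)
    (F : EuclideanSpace ℝ (Fin d) → ℝ) (hF : F = fun x => ∑ i, p i * f i x)
    (hμ : 0 < μ)
    (hsc : ∀ x y, μ * ‖x - y‖ ^ 2 ≤ ⟪x - y, gradient F x - gradient F y⟫)
    (xstar : EuclideanSpace ℝ (Fin d)) (hmin : ∀ x, F xstar ≤ F x)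
    (σ2 : ℝ) (hσ2 : σ2 = ∑ i, p i * ‖gradient (f i) xstar‖ ^ 2)
    (hγ0 : 0 < γ) (hγ : γ ≤ 1 / supL)
    (x : EuclideanSpace ℝ (Fin d)) :
    ∑ i, p i * ‖(x - γ • gradient (f i) x) - xstar‖ ^ 2 ≤
      (1 - 2 * γ * μ * (1 - γ * supL)) * ‖x - xstar‖ ^ 2 + 2 * γ ^ 2 * σ2 :=
  stmt2_general f L supL μ γ p hp hps hconv hdiff hlip hLsup hsupL F hF hsc xstar hmin σ2 hσ2 hγ0 hγ
    x
end

section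
/- Under the assumptions of the single-step SGD contraction bound, the SGD iterates x_{k+1} = x_k - γ∇f_{i_k}(x_k) with i.i.d. indices i_k ∼ D and step size γ < 1/supL satisfy E‖x_k - x⋆‖² ≤ (1 - 2γμ(1 - γ·supL))^k ‖x_0 - x⋆‖² + γσ²/(μ(1 - γ·supL)). -/
/-!
Each `f i` is co-coercive: `‖∇f x - ∇f y‖² ≤ L ⟪x - y, ∇f x - ∇f y⟫`, from the first-order
convexity inequality and the descent lemma. Averaging over `i` with `∇F x⋆ = 0` bounds the second
moment of the stochastic gradient by `2L ⟪x - x⋆, ∇F x⟫ + 2σ²`, and strong monotonicity of `∇F`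
turns one SGD step into the drift inequality `E‖x⁺ - x⋆‖² ≤ ρ ‖x - x⋆‖² + 2γ²σ²` with
`ρ = 1 - 2γμ(1 - γL) ∈ [0, 1)`. The tower property over i.i.d. indices and unrolling the
recursion give the bound, since `2γ²σ² / (1 - ρ) = γσ² / (μ(1 - γL))`.
-/

open scoped RealInnerProductSpace

section Smooth

variable {H : Type*} [NormedAddCommGroup H] [InnerProductSpace ℝ H] [CompleteSpace H]
  {f : H → ℝ}

theorem HasGradientAt.hasDerivAt_add_smul {g x v : H} {t : ℝ}
    (hf : HasGradientAt f g (x + t • v)) :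
    HasDerivAt (fun s : ℝ => f (x + s • v)) ⟪g, v⟫ t := by
  have hline : HasDerivAt (fun s : ℝ => x + s • v) v t := by
    simpa using ((hasDerivAt_id t).smul_const v).const_add x
  have h := HasFDerivAt.comp_hasDerivAt t (hasGradientAt_iff_hasFDerivAt.mp hf) hline
  rwa [InnerProductSpace.toDual_apply_apply] at h

theorem ConvexOn.inner_gradient_le_sub (hc : ConvexOn ℝ Set.univ f) {x : H}
    (hf : DifferentiableAt ℝ f x) (y : H) :
    ⟪gradient f x, y - x⟫ ≤ f y - f x := by
  have hline : ConvexOn ℝ Set.univ (fun s : ℝ => f (x + s • (y - x))) := by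
    simpa [Function.comp_def, AffineMap.lineMap_apply, add_comm] using
      hc.comp_affineMap (AffineMap.lineMap x y : ℝ →ᵃ[ℝ] H)
  have hder := (show HasGradientAt f (gradient f x) (x + (0 : ℝ) • (y - x)) by
    simpa using hf.hasGradientAt).hasDerivAt_add_smul
  simpa [slope_def_field] using
    hline.le_slope_of_hasDerivAt (Set.mem_univ 0) (Set.mem_univ 1) one_pos hder

theorem le_add_inner_gradient_add_of_lipschitz_gradient {C : ℝ} (hf : Differentiable ℝ f)
    (hl : ∀ a b, ‖gradient f a - gradient f b‖ ≤ C * ‖a - b‖) (x y : H) :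
    f y ≤ f x + ⟪gradient f x, y - x⟫ + C / 2 * ‖y - x‖ ^ 2 := by
  set v := y - x
  set φ : ℝ → ℝ := fun t => f (x + t • v) - t * ⟪gradient f x, v⟫ - C / 2 * t ^ 2 * ‖v‖ ^ 2
  have hder : ∀ t : ℝ, HasDerivAt φ
      (⟪gradient f (x + t • v), v⟫ - ⟪gradient f x, v⟫ - C / 2 * (2 * t) * ‖v‖ ^ 2) t := by
    intro t
    refine (((hf _).hasGradientAt.hasDerivAt_add_smul.sub ?_).sub ?_)
    · simpa using (hasDerivAt_id t).mul_const ⟪gradient f x, v⟫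
    · simpa using ((hasDerivAt_pow 2 t).const_mul (C / 2)).mul_const (‖v‖ ^ 2)
  -- `φ' t ≤ 0` on `[0, 1]` because `∇f` grows at most like `C t ‖v‖` along the segment.
  have hanti : AntitoneOn φ (Set.Icc 0 1) := by
    refine antitoneOn_of_deriv_nonpos (convex_Icc 0 1)
      (fun t _ => (hder t).continuousAt.continuousWithinAt)
      (fun t _ => (hder t).differentiableAt.differentiableWithinAt) fun t ht => ?_
    rw [interior_Icc] at ht
    have hgrowth : ⟪gradient f (x + t • v) - gradient f x, v⟫ ≤ C * t * ‖v‖ ^ 2 :=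
      calc ⟪gradient f (x + t • v) - gradient f x, v⟫
          ≤ ‖gradient f (x + t • v) - gradient f x‖ * ‖v‖ := real_inner_le_norm _ _
        _ ≤ C * ‖(x + t • v) - x‖ * ‖v‖ := by gcongr; exact hl _ _
        _ = C * t * ‖v‖ ^ 2 := by
          rw [add_sub_cancel_left, norm_smul, Real.norm_of_nonneg ht.1.le]; ring
    rw [inner_sub_left] at hgrowth
    rw [(hder t).deriv]
    linarith
  have h01 := hanti ⟨le_rfl, zero_le_one⟩ ⟨zero_le_one, le_rfl⟩ zero_le_one
  simp only [φ, v, zero_smul, add_zero, one_smul, add_sub_cancel] at h01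
  linarith

theorem ConvexOn.norm_gradient_sub_sq_div_le {C : ℝ} (hC : 0 < C)
    (hc : ConvexOn ℝ Set.univ f) (hf : Differentiable ℝ f)
    (hl : ∀ a b, ‖gradient f a - gradient f b‖ ≤ C * ‖a - b‖) (x y : H) :
    ‖gradient f x - gradient f y‖ ^ 2 / (2 * C) ≤ f x - f y - ⟪gradient f y, x - y⟫ := by
  set w := gradient f x - gradient f y
  -- Compare the lower bound at `y` with the upper bound at `x` in the point `x - w / C`.
  set z := x - C⁻¹ • w
  have hupper := le_add_inner_gradient_add_of_lipschitz_gradient hf hl x z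
  have hlower := hc.inner_gradient_le_sub (hf y) z
  have hzy : z - y = (x - y) - C⁻¹ • w := by simp only [z]; abel
  have hzx : z - x = -(C⁻¹ • w) := by simp only [z]; abel
  rw [hzy, inner_sub_right] at hlower
  rw [hzx, inner_neg_right, norm_neg, norm_smul, real_inner_smul_right,
    Real.norm_of_nonneg (inv_nonneg.mpr hC.le)] at hupper
  rw [real_inner_smul_right] at hlower
  have hw : C⁻¹ * ⟪gradient f x, w⟫ - C⁻¹ * ⟪gradient f y, w⟫ = C⁻¹ * ‖w‖ ^ 2 := by
    rw [← mul_sub, ← inner_sub_left, real_inner_self_eq_norm_sq]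
  have : C / 2 * (C⁻¹ * ‖w‖) ^ 2 - C⁻¹ * ‖w‖ ^ 2 = -(‖w‖ ^ 2 / (2 * C)) := by
    field_simp; ring
  linarith

theorem ConvexOn.norm_gradient_sub_sq_le_inner {C : ℝ} (hC : 0 < C)
    (hc : ConvexOn ℝ Set.univ f) (hf : Differentiable ℝ f)
    (hl : ∀ a b, ‖gradient f a - gradient f b‖ ≤ C * ‖a - b‖) (x y : H) :
    ‖gradient f x - gradient f y‖ ^ 2 ≤ C * ⟪x - y, gradient f x - gradient f y⟫ := by
  have hxy := hc.norm_gradient_sub_sq_div_le hC hf hl x y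
  have hyx := hc.norm_gradient_sub_sq_div_le hC hf hl y x
  rw [norm_sub_rev] at hyx
  have hinner : ⟪x - y, gradient f x - gradient f y⟫ =
      -⟪gradient f y, x - y⟫ - ⟪gradient f x, y - x⟫ := by
    rw [← neg_sub x y, inner_neg_right, real_inner_comm, inner_sub_left]; ring
  have hsum : ‖gradient f x - gradient f y‖ ^ 2 / C ≤
      ⟪x - y, gradient f x - gradient f y⟫ := by
    rw [hinner, show ∀ a : ℝ, a / C = a / (2 * C) + a / (2 * C) by intro a; field_simp; ring]
    linarith
  rwa [div_le_iff₀ hC, mul_comm] at hsum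

end Smooth

section WeightedSum

variable {H ι : Type*} [NormedAddCommGroup H] [InnerProductSpace ℝ H] [Fintype ι]
  {p : ι → ℝ}

theorem gradient_fun_sum_mul [CompleteSpace H] {f : ι → H → ℝ} {x : H}
    (hf : ∀ i, DifferentiableAt ℝ (f i) x) :
    gradient (fun y => ∑ i, p i * f i y) x = ∑ i, p i • gradient (f i) x := by
  simp [gradient, fderiv_fun_sum (fun i _ => (hf i).const_mul (p i)), fderiv_const_mul (hf _),
    map_sum]

theorem norm_sum_smul_sub_sum_smul_le (hp : ∀ i, 0 ≤ p i) (hps : ∑ i, p i = 1)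
    {g : ι → H → H} {C : ℝ} (hl : ∀ i a b, ‖g i a - g i b‖ ≤ C * ‖a - b‖) (a b : H) :
    ‖∑ i, p i • g i a - ∑ i, p i • g i b‖ ≤ C * ‖a - b‖ :=
  calc ‖∑ i, p i • g i a - ∑ i, p i • g i b‖ = ‖∑ i, p i • (g i a - g i b)‖ := by
        simp only [smul_sub, Finset.sum_sub_distrib]
    _ ≤ ∑ i, p i * (C * ‖a - b‖) := by
        refine (norm_sum_le _ _).trans (Finset.sum_le_sum fun i _ => ?_)
        rw [norm_smul, Real.norm_of_nonneg (hp i)]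
        exact mul_le_mul_of_nonneg_left (hl i a b) (hp i)
    _ = C * ‖a - b‖ := by rw [← Finset.sum_mul, hps, one_mul]

theorem sum_mul_inner_eq_inner_sum_smul (v : H) (g : ι → H) :
    ∑ i, p i * ⟪v, g i⟫ = ⟪v, ∑ i, p i • g i⟫ := by
  simp [inner_sum, real_inner_smul_right]

theorem sum_mul_norm_sub_smul_sq (hps : ∑ i, p i = 1) (v : H) (g : ι → H) (γ : ℝ) :
    ∑ i, p i * ‖v - γ • g i‖ ^ 2 =
      ‖v‖ ^ 2 - 2 * γ * ⟪v, ∑ i, p i • g i⟫ + γ ^ 2 * ∑ i, p i * ‖g i‖ ^ 2 := by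
  simp only [norm_sub_sq_real, real_inner_smul_right, norm_smul, mul_pow, Real.norm_eq_abs,
    sq_abs, mul_add, mul_sub, Finset.sum_add_distrib, Finset.sum_sub_distrib, ← Finset.sum_mul,
    hps, ← sum_mul_inner_eq_inner_sum_smul, Finset.mul_sum]
  rw [one_mul]
  congr 1
  · congr 1; exact Finset.sum_congr rfl fun i _ => by ring
  · exact Finset.sum_congr rfl fun i _ => by ring

theorem le_of_strongly_monotone_of_lipschitz [Nontrivial H] {g : H → H} {μ C : ℝ}
    (hsc : ∀ x y, μ * ‖x - y‖ ^ 2 ≤ ⟪x - y, g x - g y⟫)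
    (hl : ∀ x y, ‖g x - g y‖ ≤ C * ‖x - y‖) : μ ≤ C := by
  obtain ⟨x, hx⟩ := exists_ne (0 : H)
  have hpos : 0 < ‖x‖ ^ 2 := by positivity
  have := (hsc x 0).trans ((real_inner_le_norm _ _).trans
    (mul_le_mul_of_nonneg_left (hl x 0) (norm_nonneg _)))
  rw [sub_zero] at this
  nlinarith

variable [CompleteSpace H] {f : ι → H → ℝ} {C : ℝ} {xstar : H}

theorem sum_mul_norm_gradient_sq_le (hp : ∀ i, 0 ≤ p i) (hC : 0 < C)
    (hconv : ∀ i, ConvexOn ℝ Set.univ (f i)) (hdiff : ∀ i, Differentiable ℝ (f i))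
    (hlip : ∀ i a b, ‖gradient (f i) a - gradient (f i) b‖ ≤ C * ‖a - b‖)
    (hstar : ∑ i, p i • gradient (f i) xstar = 0) (x : H) :
    ∑ i, p i * ‖gradient (f i) x‖ ^ 2 ≤
      2 * C * ⟪x - xstar, ∑ i, p i • gradient (f i) x⟫ +
        2 * ∑ i, p i * ‖gradient (f i) xstar‖ ^ 2 := by
  have hpoint : ∀ i, ‖gradient (f i) x‖ ^ 2 ≤
      2 * C * ⟪x - xstar, gradient (f i) x - gradient (f i) xstar⟫ +
        2 * ‖gradient (f i) xstar‖ ^ 2 := by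
    intro i
    have hpar := parallelogram_law_with_norm ℝ
      (gradient (f i) x - gradient (f i) xstar) (gradient (f i) xstar)
    have hcoco := (hconv i).norm_gradient_sub_sq_le_inner hC (hdiff i) (hlip i) x xstar
    rw [sub_add_cancel] at hpar
    nlinarith [norm_nonneg (gradient (f i) x - gradient (f i) xstar - gradient (f i) xstar)]
  calc ∑ i, p i * ‖gradient (f i) x‖ ^ 2
      ≤ ∑ i, p i * (2 * C * ⟪x - xstar, gradient (f i) x - gradient (f i) xstar⟫ +
          2 * ‖gradient (f i) xstar‖ ^ 2) :=
        Finset.sum_le_sum fun i _ => mul_le_mul_of_nonneg_left (hpoint i) (hp i)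
    _ = 2 * C * ∑ i, p i * ⟪x - xstar, gradient (f i) x - gradient (f i) xstar⟫ +
          2 * ∑ i, p i * ‖gradient (f i) xstar‖ ^ 2 := by
        simp only [mul_add, Finset.sum_add_distrib, Finset.mul_sum]
        congr 1 <;> exact Finset.sum_congr rfl fun i _ => by ring
    _ = 2 * C * ⟪x - xstar, ∑ i, p i • gradient (f i) x⟫ +
          2 * ∑ i, p i * ‖gradient (f i) xstar‖ ^ 2 := by
        simp only [sum_mul_inner_eq_inner_sum_smul, smul_sub, Finset.sum_sub_distrib, hstar,
          sub_zero]

theorem sum_mul_norm_sub_smul_gradient_sub_sq_le (hp : ∀ i, 0 ≤ p i) (hps : ∑ i, p i = 1)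
    (hC : 0 < C) (hconv : ∀ i, ConvexOn ℝ Set.univ (f i))
    (hdiff : ∀ i, Differentiable ℝ (f i))
    (hlip : ∀ i a b, ‖gradient (f i) a - gradient (f i) b‖ ≤ C * ‖a - b‖)
    (hstar : ∑ i, p i • gradient (f i) xstar = 0) {μ γ : ℝ} (hγ : 0 ≤ γ) (hγC : γ * C ≤ 1)
    {x : H} (hsc : μ * ‖x - xstar‖ ^ 2 ≤ ⟪x - xstar, ∑ i, p i • gradient (f i) x⟫) :
    ∑ i, p i * ‖x - γ • gradient (f i) x - xstar‖ ^ 2 ≤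
      (1 - 2 * γ * μ * (1 - γ * C)) * ‖x - xstar‖ ^ 2 +
        2 * γ ^ 2 * ∑ i, p i * ‖gradient (f i) xstar‖ ^ 2 := by
  simp only [sub_right_comm x _ xstar]
  rw [sum_mul_norm_sub_smul_sq hps]
  have hvar := sum_mul_norm_gradient_sq_le hp hC hconv hdiff hlip hstar x
  have h1 : 0 ≤ γ * (1 - γ * C) := mul_nonneg hγ (sub_nonneg.mpr hγC)
  nlinarith [mul_le_mul_of_nonneg_left hvar (sq_nonneg γ), mul_le_mul_of_nonneg_left hsc h1]

end WeightedSum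

theorem sgd_rate_mem_Ico {γ μ L : ℝ} (hγ : 0 < γ) (hμ : 0 < μ) (hμL : μ ≤ L) (hγL : γ * L < 1) :
    1 - 2 * γ * μ * (1 - γ * L) ∈ Set.Ico 0 1 := by
  have hpos : 0 < γ * (1 - γ * L) := mul_pos hγ (sub_pos.mpr hγL)
  constructor
  · nlinarith [mul_le_mul_of_nonneg_right hμL hpos.le, sq_nonneg (2 * γ * L - 1)]
  · nlinarith [mul_pos hμ hpos]

theorem Fintype.sum_prod_mul_eq_sum_snoc {ι R : Type*} [Fintype ι] [CommSemiring R]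
    (p : ι → R) (k : ℕ) (g : (Fin (k + 1) → ι) → R) :
    ∑ s : Fin (k + 1) → ι, (∏ j, p (s j)) * g s =
      ∑ t : Fin k → ι, (∏ j, p (t j)) * ∑ i, p i * g (Fin.snoc t i) := by
  rw [← (Fin.snocEquiv fun _ => ι).sum_comp, Fintype.sum_prod_type, Finset.sum_comm]
  refine Finset.sum_congr rfl fun t _ => ?_
  rw [Finset.mul_sum]
  refine Finset.sum_congr rfl fun i _ => ?_
  simp [Fin.snocEquiv, Fin.prod_univ_castSucc]
  ring

theorem sum_prod_mul_succ_le_of_drift {ι E : Type*} [Fintype ι] {p : ι → ℝ}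
    (hp : ∀ i, 0 ≤ p i) (hps : ∑ i, p i = 1) {X : ∀ k : ℕ, (Fin k → ι) → E} {T : E → ι → E}
    (hX : ∀ k s, X (k + 1) s = T (X k (s ∘ Fin.castSucc)) (s (Fin.last k)))
    {V : E → ℝ} {ρ c : ℝ} (hT : ∀ x, ∑ i, p i * V (T x i) ≤ ρ * V x + c) (k : ℕ) :
    ∑ s : Fin (k + 1) → ι, (∏ j, p (s j)) * V (X (k + 1) s) ≤
      ρ * ∑ s : Fin k → ι, (∏ j, p (s j)) * V (X k s) + c :=
  calc _ = ∑ t : Fin k → ι, (∏ j, p (t j)) * ∑ i, p i * V (T (X k t) i) := by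
        simp [Fintype.sum_prod_mul_eq_sum_snoc, hX]
    _ ≤ ∑ t : Fin k → ι, (∏ j, p (t j)) * (ρ * V (X k t) + c) :=
        Finset.sum_le_sum fun t _ =>
          mul_le_mul_of_nonneg_left (hT _) (Finset.prod_nonneg fun j _ => hp _)
    _ = ρ * ∑ t : Fin k → ι, (∏ j, p (t j)) * V (X k t) +
          c * ∑ t : Fin k → ι, ∏ j, p (t j) := by
        rw [Finset.mul_sum, Finset.mul_sum, ← Finset.sum_add_distrib]
        exact Finset.sum_congr rfl fun t _ => by ring
    _ = _ := by rw [← Fintype.sum_pow, hps, one_pow, mul_one]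

theorem le_pow_mul_add_div_of_le_mul_add {a : ℕ → ℝ} {ρ c : ℝ} (hρ₀ : 0 ≤ ρ) (hρ₁ : ρ < 1)
    (hc : 0 ≤ c) (h : ∀ k, a (k + 1) ≤ ρ * a k + c) (k : ℕ) :
    a k ≤ ρ ^ k * a 0 + c / (1 - ρ) := by
  induction k with
  | zero => simpa using div_nonneg hc (sub_nonneg.mpr hρ₁.le)
  | succ k ih =>
    have hρ' : 1 - ρ ≠ 0 := (sub_pos.mpr hρ₁).ne'
    calc a (k + 1) ≤ ρ * a k + c := h k
      _ ≤ ρ * (ρ ^ k * a 0 + c / (1 - ρ)) + c := by gcongr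
      _ = ρ ^ (k + 1) * a 0 + c / (1 - ρ) := by field_simp; ring

theorem stmt3_general {d n : ℕ}
    (f : Fin n → EuclideanSpace ℝ (Fin d) → ℝ)
    (L : Fin n → ℝ) (supL μ γ : ℝ)
    (p : Fin n → ℝ) (hp : ∀ i, 0 ≤ p i) (hps : ∑ i, p i = 1)
    (hconv : ∀ i, ConvexOn ℝ Set.univ (f i))
    (hdiff : ∀ i, Differentiable ℝ (f i))
    (hlip : ∀ i x y, ‖gradient (f i) x - gradient (f i) y‖ ≤ L i * ‖x - y‖)
    (hLsup : ∀ i, L i ≤ supL) (hsupL : 0 < supL)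
    (F : EuclideanSpace ℝ (Fin d) → ℝ) (hF : F = fun x => ∑ i, p i * f i x)
    (hμ : 0 < μ)
    (hsc : ∀ x y, μ * ‖x - y‖ ^ 2 ≤ ⟪x - y, gradient F x - gradient F y⟫)
    (xstar : EuclideanSpace ℝ (Fin d)) (hmin : ∀ x, F xstar ≤ F x)
    (σ2 : ℝ) (hσ2 : σ2 = ∑ i, p i * ‖gradient (f i) xstar‖ ^ 2)
    (hγ0 : 0 < γ) (hγ : γ < 1 / supL)
    (x0 : EuclideanSpace ℝ (Fin d))
    (traj : ∀ k : ℕ, (Fin k → Fin n) → EuclideanSpace ℝ (Fin d))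
    (htraj0 : ∀ s, traj 0 s = x0)
    (htrajS : ∀ k (s : Fin (k + 1) → Fin n),
      traj (k + 1) s = traj k (s ∘ Fin.castSucc) -
        γ • gradient (f (s (Fin.last k))) (traj k (s ∘ Fin.castSucc))) :
    ∀ k : ℕ,
      ∑ s : Fin k → Fin n, (∏ j, p (s j)) * ‖traj k s - xstar‖ ^ 2 ≤
        (1 - 2 * γ * μ * (1 - γ * supL)) ^ k * ‖x0 - xstar‖ ^ 2 +
          γ * σ2 / (μ * (1 - γ * supL)) := by
  rcases subsingleton_or_nontrivial (EuclideanSpace ℝ (Fin d)) with hE | hE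
  · simp [hσ2, Subsingleton.elim _ (0 : EuclideanSpace ℝ (Fin d))]
  have hγL : γ * supL < 1 := (lt_div_iff₀ hsupL).mp hγ
  have hlip' : ∀ i a b, ‖gradient (f i) a - gradient (f i) b‖ ≤ supL * ‖a - b‖ :=
    fun i a b => (hlip i a b).trans (by gcongr; exact hLsup i)
  have hgradF : ∀ x, gradient F x = ∑ i, p i • gradient (f i) x := by
    subst hF; exact fun x => gradient_fun_sum_mul fun i => hdiff i x
  have hstar : ∑ i, p i • gradient (f i) xstar = 0 := by
    have hloc : IsLocalMin F xstar := Filter.Eventually.of_forall hmin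
    rw [← hgradF, gradient, hloc.fderiv_eq_zero, map_zero]
  have hμL : μ ≤ supL := le_of_strongly_monotone_of_lipschitz hsc fun a b => by
    simpa only [hgradF] using norm_sum_smul_sub_sum_smul_le hp hps hlip' a b
  obtain ⟨hρ₀, hρ₁⟩ := sgd_rate_mem_Ico hγ0 hμ hμL hγL
  have hdrift : ∀ x, ∑ i, p i * ‖x - γ • gradient (f i) x - xstar‖ ^ 2 ≤
      (1 - 2 * γ * μ * (1 - γ * supL)) * ‖x - xstar‖ ^ 2 + 2 * γ ^ 2 * σ2 := fun x => by
    rw [hσ2]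
    refine sum_mul_norm_sub_smul_gradient_sub_sq_le hp hps hsupL hconv hdiff hlip' hstar
      hγ0.le hγL.le ?_
    simpa [hgradF, hstar] using hsc x xstar
  have hlimit : 2 * γ ^ 2 * σ2 / (2 * γ * μ * (1 - γ * supL)) =
      γ * σ2 / (μ * (1 - γ * supL)) := by
    have : 1 - γ * supL ≠ 0 := (sub_pos.mpr hγL).ne'
    field_simp
  have hσ2₀ : 0 ≤ σ2 := hσ2 ▸ Finset.sum_nonneg fun i _ => mul_nonneg (hp i) (sq_nonneg _)
  have hstep := sum_prod_mul_succ_le_of_drift hp hps htrajS (V := fun x => ‖x - xstar‖ ^ 2) hdrift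
  intro k
  simpa [htraj0, hlimit] using le_pow_mul_add_div_of_le_mul_add
    (a := fun k => ∑ s : Fin k → Fin n, (∏ j, p (s j)) * ‖traj k s - xstar‖ ^ 2) hρ₀ hρ₁
    (by positivity) hstep k

/-- Theorem 2.1: linear convergence of SGD with fixed step size, with linear
dependence on `sup L / μ`.  The expectation over the i.i.d. sampling of the
indices `i_0, …, i_{k-1}` is written explicitly as a sum over all index
sequences `s : Fin k → Fin n`, weighted by their product probability, where
`traj k s` is the SGD iterate after `k` steps using the indices `s`. -/
theorem stmt3 {d n : ℕ} (hn : 0 < n)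
    (f : Fin n → EuclideanSpace ℝ (Fin d) → ℝ)
    (L : Fin n → ℝ) (supL μ γ : ℝ)
    (p : Fin n → ℝ) (hp : ∀ i, 0 ≤ p i) (hps : ∑ i, p i = 1)
    (hconv : ∀ i, ConvexOn ℝ Set.univ (f i))
    (hdiff : ∀ i, Differentiable ℝ (f i))
    (hlip : ∀ i x y, ‖gradient (f i) x - gradient (f i) y‖ ≤ L i * ‖x - y‖)
    (hLsup : ∀ i, L i ≤ supL) (hsupL : 0 < supL)
    (F : EuclideanSpace ℝ (Fin d) → ℝ) (hF : F = fun x => ∑ i, p i * f i x)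
    (hμ : 0 < μ)
    (hsc : ∀ x y, μ * ‖x - y‖ ^ 2 ≤ ⟪x - y, gradient F x - gradient F y⟫)
    (xstar : EuclideanSpace ℝ (Fin d)) (hmin : ∀ x, F xstar ≤ F x)
    (σ2 : ℝ) (hσ2 : σ2 = ∑ i, p i * ‖gradient (f i) xstar‖ ^ 2)
    (hγ0 : 0 < γ) (hγ : γ < 1 / supL)
    (x0 : EuclideanSpace ℝ (Fin d))
    (traj : ∀ k : ℕ, (Fin k → Fin n) → EuclideanSpace ℝ (Fin d))
    (htraj0 : ∀ s, traj 0 s = x0)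
    (htrajS : ∀ k (s : Fin (k + 1) → Fin n),
      traj (k + 1) s = traj k (s ∘ Fin.castSucc) -
        γ • gradient (f (s (Fin.last k))) (traj k (s ∘ Fin.castSucc))) :
    ∀ k : ℕ,
      ∑ s : Fin k → Fin n, (∏ j, p (s j)) * ‖traj k s - xstar‖ ^ 2 ≤
        (1 - 2 * γ * μ * (1 - γ * supL)) ^ k * ‖x0 - xstar‖ ^ 2 +
          γ * σ2 / (μ * (1 - γ * supL)) :=
  stmt3_general f L supL μ γ p hp hps hconv hdiff hlip hLsup hsupL F hF hμ hsc xstar hmin σ2 hσ2 hγ0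
    hγ x0 traj htraj0 htrajS
end

section
/- The randomized Kaczmarz update x_{k+1} = x_k + c·(b_i - ⟨a_i, x_k⟩)/‖a_i‖²·a_i, with row i selected with probability ‖a_i‖²/‖A‖_F², coincides with the weighted SGD update x_{k+1} = x_k - (γ/w(i))∇f_i(x_k) applied to f_i(x) = (n/2)(⟨a_i,x⟩ - b_i)², with weights w(i) = L_i/L̄ = n‖a_i‖²/‖A‖_F² and step size γ = c/‖A‖_F². -/
open scoped RealInnerProductSpace BigOperators

/-! The gradient of `f_i` is `n (⟪a_i, x⟫ - b_i) a_i` and `γ / w(i) = c / (n ‖a_i‖²)`: the factor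
`‖A‖_F²` cancels between step size and weight, and `n` between weight and gradient, leaving the
Kaczmarz step. -/

section LeastSquares

variable {E : Type*} [NormedAddCommGroup E] [InnerProductSpace ℝ E]

theorem hasGradientAt_half_mul_inner_sub_sq [CompleteSpace E] (v x : E) (β C : ℝ) :
    HasGradientAt (fun y => (C / 2) * (⟪v, y⟫ - β) ^ 2) ((C * (⟪v, x⟫ - β)) • v) x := by
  have hscalar : HasDerivAt (fun t : ℝ => (C / 2) * (t - β) ^ 2) (C * (⟪v, x⟫ - β)) ⟪v, x⟫ := by
    refine ((((hasDerivAt_id ⟪v, x⟫).sub_const β).pow 2).const_mul (C / 2)).congr_deriv ?_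
    simp only [id, Nat.cast_ofNat]
    ring
  rw [hasGradientAt_iff_hasFDerivAt]
  refine (hscalar.comp_hasFDerivAt x (innerSL ℝ v).hasFDerivAt).congr_fderiv ?_
  ext y
  simp

theorem kaczmarz_step_eq_weighted_gradient_step (v x : E) (β c S N : ℝ)
    (hv : v ≠ 0) (hS : S ≠ 0) (hN : N ≠ 0) :
    x + c • (((β - ⟪v, x⟫) / ‖v‖ ^ 2) • v) =
      x - ((c / S) / (N * ‖v‖ ^ 2 / S)) • ((N * (⟪v, x⟫ - β)) • v) := by
  have hv' : ‖v‖ ≠ 0 := norm_ne_zero_iff.mpr hv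
  rw [smul_smul, smul_smul, sub_eq_add_neg x, ← neg_smul]
  congr 2
  field_simp
  ring

end LeastSquares

theorem stmt14_general {d n : ℕ}
    (a : Fin n → EuclideanSpace ℝ (Fin d)) (b : Fin n → ℝ)
    (ha : ∀ i, a i ≠ 0) (c : ℝ)
    (f : Fin n → EuclideanSpace ℝ (Fin d) → ℝ)
    (hf : ∀ i x, f i x = ((n : ℝ) / 2) * (⟪a i, x⟫ - b i) ^ 2)
    (AF2 : ℝ) (hAF2 : AF2 = ∑ j, ‖a j‖ ^ 2)
    (w : Fin n → ℝ) (hw : ∀ i, w i = (n : ℝ) * ‖a i‖ ^ 2 / AF2)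
    (γ : ℝ) (hγ : γ = c / AF2) :
    (∀ (i : Fin n) (x : EuclideanSpace ℝ (Fin d)),
      x + c • (((b i - ⟪a i, x⟫) / ‖a i‖ ^ 2) • a i) =
        x - (γ / w i) • gradient (f i) x) ∧
    (∀ i, ‖a i‖ ^ 2 / AF2 = w i * (1 / (n : ℝ))) := by
  have hn : ∀ i : Fin n, (n : ℝ) ≠ 0 := fun i => Nat.cast_ne_zero.mpr i.pos.ne'
  refine ⟨fun i x => ?_, fun i => ?_⟩
  · have hAF2_pos : 0 < AF2 := hAF2 ▸ lt_of_lt_of_le (pow_pos (norm_pos_iff.mpr (ha i)) 2)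
      (Finset.single_le_sum (fun j _ => sq_nonneg ‖a j‖) (Finset.mem_univ i))
    rw [show f i = _ from funext (hf i),
      (hasGradientAt_half_mul_inner_sub_sq (a i) x (b i) n).gradient, hγ, hw i]
    exact kaczmarz_step_eq_weighted_gradient_step _ _ _ _ _ _ (ha i) hAF2_pos.ne' (hn i)
  · rw [hw i]
    field_simp [hn i]

/-- The randomized Kaczmarz update with row `i` chosen with probability
`‖a_i‖²/‖A‖_F²` coincides with the weighted SGD update
`x ↦ x - (γ/w(i)) ∇f_i(x)` for `f_i(x) = (n/2)(⟨a_i,x⟩-b_i)²`, with weights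
`w(i) = L_i/L̄ = n‖a_i‖²/‖A‖_F²` and step size `γ = c/‖A‖_F²`; moreover the
Kaczmarz sampling probabilities are exactly the `w`-reweighting `w(i)·(1/n)` of
the uniform source distribution. -/
theorem stmt14 {d n : ℕ} (hn : 0 < n)
    (a : Fin n → EuclideanSpace ℝ (Fin d)) (b : Fin n → ℝ)
    (ha : ∀ i, a i ≠ 0) (c : ℝ) (hc : 0 < c)
    (f : Fin n → EuclideanSpace ℝ (Fin d) → ℝ)
    (hf : ∀ i x, f i x = ((n : ℝ) / 2) * (⟪a i, x⟫ - b i) ^ 2)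
    (AF2 : ℝ) (hAF2 : AF2 = ∑ j, ‖a j‖ ^ 2)
    (w : Fin n → ℝ) (hw : ∀ i, w i = (n : ℝ) * ‖a i‖ ^ 2 / AF2)
    (γ : ℝ) (hγ : γ = c / AF2) :
    (∀ (i : Fin n) (x : EuclideanSpace ℝ (Fin d)),
      x + c • (((b i - ⟪a i, x⟫) / ‖a i‖ ^ 2) • a i) =
        x - (γ / w i) • gradient (f i) x) ∧
    (∀ i, ‖a i‖ ^ 2 / AF2 = w i * (1 / (n : ℝ))) :=
  stmt14_general a b ha c f hf AF2 hAF2 w hw γ hγ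
end

section
/- For the randomized Kaczmarz method with step size 0 < c < 1 and rows selected with probability p_i = ‖a_i‖²/‖A‖_F², the iterates satisfy E‖x_k - x⋆‖² ≤ (1 - 2c(1-c)/K(A))^k ‖x_0 - x⋆‖² + (c/(1-c))·K(A)·r, where K(A) = ‖A‖_F²‖(AᵀA)^{-1}‖₂, r = σ²/(n‖A‖_F²·min_i‖a_i‖²), and σ² = n·Σ_i ‖a_i‖²(⟨a_i,x⋆⟩ - b_i)². -/
open scoped RealInnerProductSpace BigOperators

open Finset

/-!
Write `e = x - x⋆` and `w i = ⟪a i, x⋆⟫ - b i`. Averaging one Kaczmarz step over `i` with weights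
`‖a i‖² / ‖A‖_F²` gives
`‖A‖_F² E‖e'‖² = ‖A‖_F² ‖e‖² - c(2 - c) ‖A e‖² - 2c(1 - c) ⟪w, A e⟫ + c² ‖w‖²`.
The cross term vanishes by the normal equations `Aᵀ w = 0`, and `‖e‖² ≤ ‖(AᵀA)⁻¹‖ ‖A e‖²`, so the
mean squared error contracts by `q = 1 - 2c(1 - c)/K(A)` up to the noise `c² ‖w‖² / ‖A‖_F² ≤ c² r`.
Iterating, the noise accumulates to at most `2c² r / (1 - q) = (c/(1 - c)) K(A) r`.
-/

theorem le_pow_mul_add_of_le_mul_add {u : ℕ → ℝ} {q N C : ℝ} (hq : 0 ≤ q) (hC : 0 ≤ C)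
    (hN : N ≤ (1 - q) * C) (hu : ∀ k, u (k + 1) ≤ q * u k + N) (k : ℕ) :
    u k ≤ q ^ k * u 0 + C := by
  induction k with
  | zero => simpa using hC
  | succ k ih =>
    calc u (k + 1) ≤ q * (q ^ k * u 0 + C) + N := (hu k).trans (by gcongr)
      _ ≤ q ^ (k + 1) * u 0 + C := by rw [pow_succ]; linarith

section RandomIteration

variable {ι X : Type*} [Fintype ι] (p : ι → ℝ)

theorem sum_prod_mul_fin_succ {k : ℕ} (f : (Fin (k + 1) → ι) → ℝ) :
    ∑ s, (∏ j, p (s j)) * f s =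
      ∑ s : Fin k → ι, (∏ j, p (s j)) * ∑ i, p i * f (Fin.snoc s i) := by
  rw [← (Fin.snocEquiv fun _ => ι).sum_comp, Fintype.sum_prod_type_right]
  refine sum_congr rfl fun s _ => ?_
  simp only [mul_sum, Fin.snocEquiv_apply, Fin.prod_univ_castSucc, Fin.snoc_castSucc, Fin.snoc_last]
  exact sum_congr rfl fun i _ => mul_assoc _ _ _

theorem sum_prod_mul_succ_le {step : ι → X → X} {V : X → ℝ} {q N : ℝ}
    (hp₀ : ∀ i, 0 ≤ p i) (hp₁ : ∑ i, p i = 1)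
    (hstep : ∀ x, ∑ i, p i * V (step i x) ≤ q * V x + N)
    {traj : ∀ k : ℕ, (Fin k → ι) → X}
    (htraj : ∀ k s i, traj (k + 1) (Fin.snoc s i) = step i (traj k s)) (k : ℕ) :
    ∑ s, (∏ j, p (s j)) * V (traj (k + 1) s) ≤
      q * ∑ s, (∏ j, p (s j)) * V (traj k s) + N := by
  have hmass : ∑ s : Fin k → ι, ∏ j, p (s j) = 1 := by
    rw [← Fintype.prod_sum fun (_ : Fin k) i => p i]; simp [hp₁]
  calc ∑ s, (∏ j, p (s j)) * V (traj (k + 1) s)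
      = ∑ s : Fin k → ι, (∏ j, p (s j)) * ∑ i, p i * V (step i (traj k s)) := by
        simp only [sum_prod_mul_fin_succ, htraj]
    _ ≤ ∑ s : Fin k → ι, (∏ j, p (s j)) * (q * V (traj k s) + N) :=
        sum_le_sum fun s _ => mul_le_mul_of_nonneg_left (hstep _) (prod_nonneg fun j _ => hp₀ _)
    _ = q * ∑ s, (∏ j, p (s j)) * V (traj k s) + N := by
        simp only [mul_add, sum_add_distrib, ← sum_mul, hmass, one_mul, mul_sum]
        exact congrArg (· + N) (sum_congr rfl fun s _ => by ring)

theorem sum_prod_mul_le_pow_mul_add {step : ι → X → X} {V : X → ℝ} {q N C : ℝ}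
    (hp₀ : ∀ i, 0 ≤ p i) (hp₁ : ∑ i, p i = 1)
    (hstep : ∀ x, ∑ i, p i * V (step i x) ≤ q * V x + N)
    (hq : 0 ≤ q) (hC : 0 ≤ C) (hN : N ≤ (1 - q) * C)
    {x₀ : X} {traj : ∀ k : ℕ, (Fin k → ι) → X} (htraj₀ : ∀ s, traj 0 s = x₀)
    (htraj : ∀ k s i, traj (k + 1) (Fin.snoc s i) = step i (traj k s)) (k : ℕ) :
    ∑ s, (∏ j, p (s j)) * V (traj k s) ≤ q ^ k * V x₀ + C := by
  simpa [htraj₀] using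
    le_pow_mul_add_of_le_mul_add (u := fun k => ∑ s, (∏ j, p (s j)) * V (traj k s)) hq hC hN
      (sum_prod_mul_succ_le p hp₀ hp₁ hstep htraj) k

end RandomIteration

theorem sum_div_le_sum_mul_div_mul_iInf {ι : Type*} [Fintype ι] [Nonempty ι] {f g : ι → ℝ}
    (hf : ∀ i, 0 < f i) (hg : ∀ i, 0 ≤ g i) {A : ℝ} (hA : 0 < A) :
    (∑ i, g i) / A ≤ (∑ i, f i * g i) / (A * ⨅ i, f i) := by
  obtain ⟨j, hj⟩ := exists_eq_ciInf_of_finite (f := f)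
  have hm : 0 < ⨅ i, f i := hj ▸ hf j
  calc (∑ i, g i) / A = (⨅ i, f i) * (∑ i, g i) / (A * ⨅ i, f i) := by field_simp
    _ ≤ (∑ i, f i * g i) / (A * ⨅ i, f i) := by
      rw [mul_sum]
      gcongr with i
      exacts [hg i, ciInf_le (Set.finite_range f).bddBelow i]

section Kaczmarz

variable {ι E : Type*} [NormedAddCommGroup E] [InnerProductSpace ℝ E]
  (a : ι → E) (b : ι → ℝ)

noncomputable def kaczmarzStep (c : ℝ) (i : ι) (x : E) : E :=
  x + c • ((b i - ⟪a i, x⟫) / ‖a i‖ ^ 2) • a i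

theorem norm_sq_mul_norm_kaczmarzStep_sub_sq (c : ℝ) {i : ι} (hai : a i ≠ 0) (x y : E) :
    ‖a i‖ ^ 2 * ‖kaczmarzStep a b c i x - y‖ ^ 2 = ‖a i‖ ^ 2 * ‖x - y‖ ^ 2
      - c * (2 - c) * ⟪a i, x - y⟫ ^ 2
      - 2 * c * (1 - c) * ((⟪a i, y⟫ - b i) * ⟪a i, x - y⟫)
      + c ^ 2 * (⟪a i, y⟫ - b i) ^ 2 := by
  have hna : ‖a i‖ ^ 2 ≠ 0 := by positivity
  have hsplit : kaczmarzStep a b c i x - y =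
      (x - y) + (c * ((b i - ⟪a i, x⟫) / ‖a i‖ ^ 2)) • a i := by
    rw [kaczmarzStep, smul_smul]; abel
  have hx : ⟪a i, x⟫ = ⟪a i, x - y⟫ + ⟪a i, y⟫ := by rw [inner_sub_right]; ring
  rw [hsplit, hx, norm_add_sq_real, real_inner_smul_right, norm_smul, mul_pow, Real.norm_eq_abs,
    sq_abs, real_inner_comm (a i) (x - y)]
  field_simp
  ring

variable [Fintype ι]

theorem sum_residual_mul_inner_eq_zero {y : E}
    (hmin : ∀ x, ∑ i, (⟪a i, y⟫ - b i) ^ 2 ≤ ∑ i, (⟪a i, x⟫ - b i) ^ 2) (u : E) :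
    ∑ i, (⟪a i, y⟫ - b i) * ⟪a i, u⟫ = 0 := by
  have hquad : ∀ t : ℝ, 0 ≤ (∑ i, ⟪a i, u⟫ ^ 2) * (t * t)
      + 2 * (∑ i, (⟪a i, y⟫ - b i) * ⟪a i, u⟫) * t + 0 := by
    intro t
    have hexpand : ∑ i, (⟪a i, y + t • u⟫ - b i) ^ 2 = ∑ i, (⟪a i, y⟫ - b i) ^ 2
        + ((∑ i, ⟪a i, u⟫ ^ 2) * (t * t)
          + 2 * (∑ i, (⟪a i, y⟫ - b i) * ⟪a i, u⟫) * t) := by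
      simp only [sum_mul, mul_sum, ← sum_add_distrib, inner_add_right, real_inner_smul_right]
      exact sum_congr rfl fun i _ => by ring
    linarith [hmin (y + t • u)]
  have := discrim_le_zero hquad
  rw [discrim] at this
  nlinarith [sq_nonneg (∑ i, (⟪a i, y⟫ - b i) * ⟪a i, u⟫)]

theorem norm_sq_le_opNorm_mul_sum_inner_sq {T S : E →L[ℝ] E}
    (hT : ∀ x, T x = ∑ i, ⟪a i, x⟫ • a i) (hTS : T.comp S = ContinuousLinearMap.id ℝ E)
    (u : E) :
    ‖u‖ ^ 2 ≤ ‖S‖ * ∑ i, ⟪a i, u⟫ ^ 2 := by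
  have hinner : ∀ x y, ⟪T x, y⟫ = ∑ i, ⟪a i, x⟫ * ⟪a i, y⟫ := fun x y => by
    simp only [hT, sum_inner, real_inner_smul_left]
  have hTSu : T (S u) = u := by simpa using congrArg (· u) hTS
  have hSu : ∑ i, ⟪a i, S u⟫ ^ 2 ≤ ‖S‖ * ‖u‖ ^ 2 :=
    calc ∑ i, ⟪a i, S u⟫ ^ 2 = ⟪T (S u), S u⟫ := by simp only [hinner, sq]
      _ = ⟪u, S u⟫ := by rw [hTSu]
      _ ≤ ‖u‖ * ‖S u‖ := real_inner_le_norm _ _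
      _ ≤ ‖u‖ * (‖S‖ * ‖u‖) := by gcongr; exact S.le_opNorm u
      _ = ‖S‖ * ‖u‖ ^ 2 := by ring
  have hcs : (‖u‖ ^ 2) ^ 2 ≤ ‖u‖ ^ 2 * (‖S‖ * ∑ i, ⟪a i, u⟫ ^ 2) :=
    calc (‖u‖ ^ 2) ^ 2 = (∑ i, ⟪a i, S u⟫ * ⟪a i, u⟫) ^ 2 := by
          rw [← hinner, hTSu, real_inner_self_eq_norm_sq]
      _ ≤ (∑ i, ⟪a i, S u⟫ ^ 2) * ∑ i, ⟪a i, u⟫ ^ 2 := sum_mul_sq_le_sq_mul_sq _ _ _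
      _ ≤ (‖S‖ * ‖u‖ ^ 2) * ∑ i, ⟪a i, u⟫ ^ 2 :=
          mul_le_mul_of_nonneg_right hSu (sum_nonneg fun i _ => sq_nonneg _)
      _ = ‖u‖ ^ 2 * (‖S‖ * ∑ i, ⟪a i, u⟫ ^ 2) := by ring
  rcases (sq_nonneg ‖u‖).eq_or_lt with hu | hu
  · rw [← hu]; exact mul_nonneg (norm_nonneg S) (sum_nonneg fun i _ => sq_nonneg _)
  · rw [sq] at hcs; exact le_of_mul_le_mul_left hcs hu

theorem one_le_sum_norm_sq_mul {κ : ℝ} (hκ : ∀ u, ‖u‖ ^ 2 ≤ κ * ∑ i, ⟪a i, u⟫ ^ 2)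
    {i : ι} (hai : a i ≠ 0) : 1 ≤ (∑ j, ‖a j‖ ^ 2) * κ := by
  have hpos : 0 < ‖a i‖ ^ 2 := by positivity
  have hQ : ∑ j, ⟪a j, a i⟫ ^ 2 ≤ (∑ j, ‖a j‖ ^ 2) * ‖a i‖ ^ 2 := by
    rw [sum_mul]
    refine sum_le_sum fun j _ => ?_
    rw [← mul_pow, ← sq_abs]
    exact pow_le_pow_left₀ (abs_nonneg _) (abs_real_inner_le_norm _ _) 2
  have hκ₀ : 0 ≤ κ := by
    by_contra! h
    nlinarith [hκ (a i), sum_nonneg fun j (_ : j ∈ univ) => sq_nonneg ⟪a j, a i⟫]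
  have := (hκ (a i)).trans (mul_le_mul_of_nonneg_left hQ hκ₀)
  nlinarith

theorem sum_norm_sq_div_mul_norm_kaczmarzStep_sub_sq_le [Nonempty ι] {c κ : ℝ}
    (hc₀ : 0 ≤ c) (hc₁ : c ≤ 1) (hκ₀ : 0 < κ) (ha : ∀ i, a i ≠ 0)
    (hκ : ∀ u, ‖u‖ ^ 2 ≤ κ * ∑ i, ⟪a i, u⟫ ^ 2) {y : E}
    (hy : ∀ u, ∑ i, (⟪a i, y⟫ - b i) * ⟪a i, u⟫ = 0) (x : E) :
    ∑ i, ‖a i‖ ^ 2 / (∑ j, ‖a j‖ ^ 2) * ‖kaczmarzStep a b c i x - y‖ ^ 2 ≤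
      (1 - 2 * c * (1 - c) / ((∑ j, ‖a j‖ ^ 2) * κ)) * ‖x - y‖ ^ 2
        + c ^ 2 * (∑ i, (⟪a i, y⟫ - b i) ^ 2) / ∑ j, ‖a j‖ ^ 2 := by
  set A := ∑ j, ‖a j‖ ^ 2
  have hA : 0 < A := sum_pos (fun j _ => by have := ha j; positivity) univ_nonempty
  have hsum : ∑ i, ‖a i‖ ^ 2 * ‖kaczmarzStep a b c i x - y‖ ^ 2 = A * ‖x - y‖ ^ 2
      - c * (2 - c) * ∑ i, ⟪a i, x - y⟫ ^ 2 + c ^ 2 * ∑ i, (⟪a i, y⟫ - b i) ^ 2 := by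
    simp only [norm_sq_mul_norm_kaczmarzStep_sub_sq a b c (ha _), sum_add_distrib, sum_sub_distrib,
      ← mul_sum, ← sum_mul, hy, mul_zero, sub_zero]
    rfl
  have hQ := hκ (x - y)
  have hQ₀ : 0 ≤ ∑ i, ⟪a i, x - y⟫ ^ 2 := sum_nonneg fun i _ => sq_nonneg _
  have hdecay :
      2 * c * (1 - c) * (‖x - y‖ ^ 2 / κ) ≤ c * (2 - c) * ∑ i, ⟪a i, x - y⟫ ^ 2 :=
    mul_le_mul (by nlinarith) (div_le_of_le_mul₀ hκ₀.le hQ₀ (by linarith)) (by positivity)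
      (by nlinarith)
  calc ∑ i, ‖a i‖ ^ 2 / A * ‖kaczmarzStep a b c i x - y‖ ^ 2
      = (A * ‖x - y‖ ^ 2 - c * (2 - c) * ∑ i, ⟪a i, x - y⟫ ^ 2
          + c ^ 2 * ∑ i, (⟪a i, y⟫ - b i) ^ 2) / A := by
        simp only [div_mul_eq_mul_div, ← sum_div, hsum]
    _ ≤ (A * ‖x - y‖ ^ 2 - 2 * c * (1 - c) * (‖x - y‖ ^ 2 / κ)
          + c ^ 2 * ∑ i, (⟪a i, y⟫ - b i) ^ 2) / A := by gcongr
    _ = _ := by field_simp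

end Kaczmarz

theorem stmt15_general {d n : ℕ} (hn : 0 < n)
    (a : Fin n → EuclideanSpace ℝ (Fin d)) (b : Fin n → ℝ)
    (ha : ∀ i, a i ≠ 0) (c : ℝ) (hc0 : 0 < c) (hc1 : c < 1)
    (AF2 : ℝ) (hAF2 : AF2 = ∑ j, ‖a j‖ ^ 2)
    (p : Fin n → ℝ) (hp : ∀ i, p i = ‖a i‖ ^ 2 / AF2)
    (T S : EuclideanSpace ℝ (Fin d) →L[ℝ] EuclideanSpace ℝ (Fin d))
    (hT : ∀ x, T x = ∑ i, ⟪a i, x⟫ • a i)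
    (hTS : T.comp S = ContinuousLinearMap.id ℝ _)
    (K : ℝ) (hK : K = AF2 * ‖S‖)
    (F : EuclideanSpace ℝ (Fin d) → ℝ)
    (hF : ∀ x, F x = (1 / 2) * ∑ i, (⟪a i, x⟫ - b i) ^ 2)
    (xstar : EuclideanSpace ℝ (Fin d)) (hmin : ∀ x, F xstar ≤ F x)
    (σ2 : ℝ) (hσ2 : σ2 = (n : ℝ) * ∑ i, ‖a i‖ ^ 2 * (⟪a i, xstar⟫ - b i) ^ 2)
    (r : ℝ) (hr : r = σ2 / ((n : ℝ) * AF2 * ⨅ i, ‖a i‖ ^ 2))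
    (x0 : EuclideanSpace ℝ (Fin d))
    (traj : ∀ k : ℕ, (Fin k → Fin n) → EuclideanSpace ℝ (Fin d))
    (htraj0 : ∀ s, traj 0 s = x0)
    (htrajS : ∀ k (s : Fin (k + 1) → Fin n),
      traj (k + 1) s = traj k (s ∘ Fin.castSucc) +
        c • (((b (s (Fin.last k)) - ⟪a (s (Fin.last k)), traj k (s ∘ Fin.castSucc)⟫) /
          ‖a (s (Fin.last k))‖ ^ 2) • a (s (Fin.last k)))) :
    ∀ k : ℕ,
      ∑ s : Fin k → Fin n, (∏ j, p (s j)) * ‖traj k s - xstar‖ ^ 2 ≤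
        (1 - 2 * c * (1 - c) / K) ^ k * ‖x0 - xstar‖ ^ 2 + (c / (1 - c)) * K * r := by
  have : Nonempty (Fin n) := ⟨⟨0, hn⟩⟩
  obtain rfl : p = fun i => ‖a i‖ ^ 2 / AF2 := funext hp
  subst hAF2 hK
  have hκ := norm_sq_le_opNorm_mul_sum_inner_sq a hT hTS
  have hK₁ := one_le_sum_norm_sq_mul a hκ (ha ⟨0, hn⟩)
  have hy := sum_residual_mul_inner_eq_zero a b (y := xstar) fun x => by
    have := hmin x; simp only [hF] at this; linarith
  set W := ∑ i, (⟪a i, xstar⟫ - b i) ^ 2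
  set A := ∑ j, ‖a j‖ ^ 2
  have hA : 0 < A := sum_pos (fun j _ => by have := ha j; positivity) univ_nonempty
  have hS : 0 < ‖S‖ := pos_of_mul_pos_right (one_pos.trans_le hK₁) hA.le
  have hWr : W / A ≤ r := by
    rw [hr, hσ2, mul_assoc, mul_div_mul_left _ _ (Nat.cast_pos.mpr hn).ne']
    exact sum_div_le_sum_mul_div_mul_iInf (fun i => by have := ha i; positivity)
      (fun i => sq_nonneg _) hA
  have hc : 0 < 1 - c := sub_pos.mpr hc1
  have hW : 0 ≤ W / A := div_nonneg (sum_nonneg fun i _ => sq_nonneg _) hA.le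
  have hq : 0 ≤ 1 - 2 * c * (1 - c) / (A * ‖S‖) :=
    sub_nonneg.mpr (div_le_one_of_le₀ (by nlinarith) (by positivity))
  have hN : c ^ 2 * W / A ≤
      (1 - (1 - 2 * c * (1 - c) / (A * ‖S‖))) * (c / (1 - c) * (A * ‖S‖) * r) :=
    calc c ^ 2 * W / A = c ^ 2 * (W / A) := mul_div_assoc _ _ _
      _ ≤ c ^ 2 * (2 * r) := by gcongr; linarith
      _ = _ := by field_simp; ring
  exact sum_prod_mul_le_pow_mul_add (fun i => ‖a i‖ ^ 2 / A) (fun i => by positivity)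
    (by rw [← sum_div, div_self hA.ne'])
    (sum_norm_sq_div_mul_norm_kaczmarzStep_sub_sq_le a b hc0.le hc1.le hS ha hκ hy)
    (V := fun x => ‖x - xstar‖ ^ 2) hq (by have := hW.trans hWr; positivity) hN htraj0
    fun k s i => by rw [htrajS, Fin.snoc_comp_castSucc, Fin.snoc_last]; rfl

/-- Corollary 5.1: randomized Kaczmarz with step size `0 < c < 1` and rows chosen
with probability `p_i = ‖a_i‖²/‖A‖_F²` converges linearly, up to a horizon:
`E‖x_k - x⋆‖² ≤ (1 - 2c(1-c)/K(A))^k ‖x_0-x⋆‖² + (c/(1-c)) K(A) r`, where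
`K(A) = ‖A‖_F² ‖(AᵀA)⁻¹‖₂` and `r = σ²/(n ‖A‖_F² min_i ‖a_i‖²)`.  The inverse
`(AᵀA)⁻¹` is represented by the map `S` inverting `T : x ↦ ∑ ⟨a_i,x⟩ a_i`, and
the expectation is an explicit sum over index sequences. -/
theorem stmt15 {d n : ℕ} (hn : 0 < n)
    (a : Fin n → EuclideanSpace ℝ (Fin d)) (b : Fin n → ℝ)
    (ha : ∀ i, a i ≠ 0) (c : ℝ) (hc0 : 0 < c) (hc1 : c < 1)
    (AF2 : ℝ) (hAF2 : AF2 = ∑ j, ‖a j‖ ^ 2)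
    (p : Fin n → ℝ) (hp : ∀ i, p i = ‖a i‖ ^ 2 / AF2)
    (T S : EuclideanSpace ℝ (Fin d) →L[ℝ] EuclideanSpace ℝ (Fin d))
    (hT : ∀ x, T x = ∑ i, ⟪a i, x⟫ • a i)
    (hTS : T.comp S = ContinuousLinearMap.id ℝ _)
    (hST : S.comp T = ContinuousLinearMap.id ℝ _)
    (K : ℝ) (hK : K = AF2 * ‖S‖)
    (F : EuclideanSpace ℝ (Fin d) → ℝ)
    (hF : ∀ x, F x = (1 / 2) * ∑ i, (⟪a i, x⟫ - b i) ^ 2)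
    (xstar : EuclideanSpace ℝ (Fin d)) (hmin : ∀ x, F xstar ≤ F x)
    (σ2 : ℝ) (hσ2 : σ2 = (n : ℝ) * ∑ i, ‖a i‖ ^ 2 * (⟪a i, xstar⟫ - b i) ^ 2)
    (r : ℝ) (hr : r = σ2 / ((n : ℝ) * AF2 * ⨅ i, ‖a i‖ ^ 2))
    (x0 : EuclideanSpace ℝ (Fin d))
    (traj : ∀ k : ℕ, (Fin k → Fin n) → EuclideanSpace ℝ (Fin d))
    (htraj0 : ∀ s, traj 0 s = x0)
    (htrajS : ∀ k (s : Fin (k + 1) → Fin n),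
      traj (k + 1) s = traj k (s ∘ Fin.castSucc) +
        c • (((b (s (Fin.last k)) - ⟪a (s (Fin.last k)), traj k (s ∘ Fin.castSucc)⟫) /
          ‖a (s (Fin.last k))‖ ^ 2) • a (s (Fin.last k)))) :
    ∀ k : ℕ,
      ∑ s : Fin k → Fin n, (∏ j, p (s j)) * ‖traj k s - xstar‖ ^ 2 ≤
        (1 - 2 * c * (1 - c) / K) ^ k * ‖x0 - xstar‖ ^ 2 + (c / (1 - c)) * K * r :=
  stmt15_general hn a b ha c hc0 hc1 AF2 hAF2 p hp T S hT hTS K hK F hF xstar hmin σ2 hσ2 r hr x0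
    traj htraj0 htrajS
end

section
/- There exists a family of strongly convex smooth problems on which no SGD-type method sampling from the unweighted source distribution can have iteration complexity linear in the average conditioning L̄/μ: for the uniform distribution over the N+1 quadratics f_1(x) = (N/2)(x₁ - b)², f_i(x) = (1/2)x₂² for i ≥ 2, with b = ±1, one has sup L_i = N, L̄ = 2N/(N+1) < 2, μ = N/(N+1), yet any algorithm accessing the f_i only via uniformly sampled indices requires at least N+1 samples in expectation before it first samples index 1, and until then its expected squared error E‖x - x⋆‖² is at least 1 (since x⋆ = (b, 0) depends on the unseen b). -/
/-!
Summing the `N + 1` components, `F b` is the isotropic quadratic `(μ / 2) ‖x - x⋆‖²` with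
`x⋆ = (b, 0)`, so its gradient is `μ (x - x⋆)` and strong convexity holds with equality. The
first time index `1` is drawn is geometric with success probability `1 / (N + 1)`. Finally the two
candidate minimizers `(±1, 0)` are antipodal, so by the parallelogram law every point is at
squared distance at least `1` from one of them.
-/

open scoped RealInnerProductSpace BigOperators

theorem tsum_succ_mul_geometric_mul_one_sub {𝕜 : Type*} [NormedField 𝕜] {r : 𝕜} (hr : ‖r‖ < 1) :
    ∑' k : ℕ, ((k : 𝕜) + 1) * r ^ k * (1 - r) = 1 / (1 - r) := by
  have hr1 : 1 - r ≠ 0 := sub_ne_zero.2 fun h => by simp [← h] at hr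
  have h := tsum_choose_mul_geometric_of_norm_lt_one 1 hr
  simp only [Nat.choose_one_right, Nat.cast_add, Nat.cast_one] at h
  rw [tsum_mul_right, h]
  field_simp

section Quadratic

variable {E : Type*} [NormedAddCommGroup E] [InnerProductSpace ℝ E]

theorem hasGradientAt_const_mul_norm_sub_sq [CompleteSpace E] (c : ℝ) (a x : E) :
    HasGradientAt (fun y => c * ‖y - a‖ ^ 2) ((2 * c) • (x - a)) x := by
  rw [hasGradientAt_iff_hasFDerivAt]
  refine (((hasFDerivAt_id x).sub_const a).norm_sq.const_mul c).congr_fderiv ?_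
  ext w
  simp [InnerProductSpace.toDual_apply_apply]
  ring

theorem gradient_const_mul_norm_sub_sq [CompleteSpace E] (c : ℝ) (a : E) :
    gradient (fun y => c * ‖y - a‖ ^ 2) = fun x => (2 * c) • (x - a) :=
  gradient_eq fun x => hasGradientAt_const_mul_norm_sub_sq c a x

theorem inner_sub_gradient_const_mul_norm_sub_sq [CompleteSpace E] (c : ℝ) (a x y : E) :
    ⟪x - y, gradient (fun z => c * ‖z - a‖ ^ 2) x - gradient (fun z => c * ‖z - a‖ ^ 2) y⟫ =
      2 * c * ‖x - y‖ ^ 2 := by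
  rw [gradient_const_mul_norm_sub_sq, ← smul_sub, sub_sub_sub_cancel_right,
    real_inner_smul_right, real_inner_self_eq_norm_sq]

theorem sq_norm_le_max_norm_sub_sq_norm_add_sq (x a : E) :
    ‖a‖ ^ 2 ≤ max (‖x - a‖ ^ 2) (‖x + a‖ ^ 2) := by
  have parallelogram : ‖x - a‖ ^ 2 + ‖x + a‖ ^ 2 = 2 * ‖x‖ ^ 2 + 2 * ‖a‖ ^ 2 := by
    rw [norm_sub_sq_real, norm_add_sq_real]; ring
  calc ‖a‖ ^ 2 ≤ (‖x - a‖ ^ 2 + ‖x + a‖ ^ 2) / 2 := by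
        rw [parallelogram]; linarith [sq_nonneg ‖x‖]
    _ ≤ max (‖x - a‖ ^ 2) (‖x + a‖ ^ 2) := by
      linarith [le_max_left (‖x - a‖ ^ 2) (‖x + a‖ ^ 2), le_max_right (‖x - a‖ ^ 2) (‖x + a‖ ^ 2)]

end Quadratic

theorem EuclideanSpace.norm_sq_eq_fin_two (v : EuclideanSpace ℝ (Fin 2)) :
    ‖v‖ ^ 2 = v 0 ^ 2 + v 1 ^ 2 := by
  simp [EuclideanSpace.norm_sq_eq, Fin.sum_univ_two, sq_abs]

theorem Fin.sum_univ_ite_eq_zero {R : Type*} [Semiring R] (n : ℕ) (a c : R) :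
    ∑ i : Fin (n + 1), (if i = 0 then a else c) = a + n * c := by
  simp [Fin.sum_univ_succ, Fin.succ_ne_zero]

theorem Fin.ciSup_ite_eq_zero {α : Type*} [ConditionallyCompleteLattice α] {n : ℕ} {a c : α}
    (h : c ≤ a) : ⨆ i : Fin (n + 1), (if i = 0 then a else c) = a := by
  refine le_antisymm (ciSup_le fun i => ?_) (le_ciSup_of_le (Set.finite_range _).bddAbove 0 ?_)
  · split_ifs
    exacts [le_rfl, h]
  · simp

/-- Tightness example: for the uniform distribution over the `N+1` quadratics
`f_1(x) = (N/2)(x₁-b)²`, `f_i(x) = (1/2)x₂²` (`i ≥ 2`), with `b = ±1`: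
`sup L_i = N`, `L̄ = 2N/(N+1)`, `F` is `μ`-strongly convex with `μ = N/(N+1)`;
the first time a uniform i.i.d. sample from `{1,…,N+1}` equals the index `1`
has expectation `N+1`; and any estimator chosen independently of `b` has
worst-case (over `b = ±1`) squared error at least `1`, since `x⋆ = (b,0)`.
Hence no method sampling uniformly can have iteration complexity linear in
`L̄/μ = 2`. -/
theorem stmt17 (N : ℕ) (hN : 1 ≤ N)
    (L : Fin (N + 1) → ℝ) (hL : ∀ i, L i = if i = 0 then (N : ℝ) else 1)
    (f : ℝ → Fin (N + 1) → EuclideanSpace ℝ (Fin 2) → ℝ)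
    (hf : ∀ b i x, f b i x =
      if i = 0 then ((N : ℝ) / 2) * (x 0 - b) ^ 2 else (1 / 2) * (x 1) ^ 2)
    (F : ℝ → EuclideanSpace ℝ (Fin 2) → ℝ)
    (hF : ∀ b x, F b x = (1 / ((N : ℝ) + 1)) * ∑ i, f b i x)
    (μ : ℝ) (hμ : μ = (N : ℝ) / ((N : ℝ) + 1))
    (xs : ℝ → EuclideanSpace ℝ (Fin 2))
    (hxs : ∀ b, xs b 0 = b ∧ xs b 1 = 0) :
    -- sup of the Lipschitz constants is N
    (⨆ i, L i) = (N : ℝ) ∧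
    -- the average Lipschitz constant is 2N/(N+1) < 2
    (∑ i, (1 / ((N : ℝ) + 1)) * L i) = 2 * (N : ℝ) / ((N : ℝ) + 1) ∧
    -- F is μ-strongly convex with μ = N/(N+1), for either value of b
    (∀ b : ℝ, b = 1 ∨ b = -1 →
      ∀ x y, μ * ‖x - y‖ ^ 2 ≤ ⟪x - y, gradient (F b) x - gradient (F b) y⟫) ∧
    -- x⋆ = (b,0) minimizes F b
    (∀ b : ℝ, b = 1 ∨ b = -1 → ∀ x, F b (xs b) ≤ F b x) ∧
    -- the expected first time a uniform i.i.d. sample from {1,…,N+1} equals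
    -- the distinguished index is N+1 (geometric distribution)
    (∑' k : ℕ, ((k : ℝ) + 1) * ((N : ℝ) / ((N : ℝ) + 1)) ^ k *
        (1 / ((N : ℝ) + 1))) = (N : ℝ) + 1 ∧
    -- any estimate independent of b has worst-case squared error at least 1
    (∀ x : EuclideanSpace ℝ (Fin 2), 1 ≤ max (‖x - xs 1‖ ^ 2) (‖x - xs (-1)‖ ^ 2)) := by
  have hF_eq : ∀ b, F b = fun y => (N / (2 * (N + 1)) : ℝ) * ‖y - xs b‖ ^ 2 := by
    intro b
    funext y
    simp only [hF, hf, Fin.sum_univ_ite_eq_zero, EuclideanSpace.norm_sq_eq_fin_two,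
      PiLp.sub_apply, (hxs b).1, (hxs b).2, sub_zero]
    field_simp
  refine ⟨?_, ?_, ?_, ?_, ?_, ?_⟩
  · simpa only [hL] using Fin.ciSup_ite_eq_zero (mod_cast hN : (1 : ℝ) ≤ N)
  · simp only [← Finset.mul_sum, hL, Fin.sum_univ_ite_eq_zero]
    field_simp
    ring
  · intro b _ x y
    rw [hF_eq, inner_sub_gradient_const_mul_norm_sub_sq, hμ]
    apply le_of_eq
    field_simp
  · intro b _ x
    simp only [hF_eq, sub_self, norm_zero, zero_pow two_ne_zero, mul_zero]
    positivity
  · have hr : ‖(N : ℝ) / (N + 1)‖ < 1 := by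
      rw [Real.norm_of_nonneg (by positivity), div_lt_one (by positivity)]
      linarith
    have h1r : 1 - (N : ℝ) / (N + 1) = 1 / (N + 1) := by field_simp; ring
    simpa [h1r] using tsum_succ_mul_geometric_mul_one_sub hr
  · intro x
    have hneg : xs (-1) = -xs 1 := by
      ext i
      fin_cases i <;> simp [(hxs _).1, (hxs _).2]
    have hone : ‖xs 1‖ ^ 2 = 1 := by
      simp [EuclideanSpace.norm_sq_eq_fin_two, (hxs 1).1, (hxs 1).2]
    simpa [hneg, hone] using sq_norm_le_max_norm_sub_sq_norm_add_sq x (xs 1)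
end
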